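/- The Koszul dual of a locally gentle bound quiver is again a locally gentle bound quiver. Precisely, if (Q,I) is a locally gentle bound quiver, then the bound quiver (Q*,I*) — where Q* is the opposite quiver of Q (same vertices, all arrows reversed) and I* consists of the opposites of exactly those composable pairs of arrows of Q that do NOT lie in I — again satisfies the locally gentle conditions. -/
import Mathlib


/-- A *bound quiver* (with relations concentrated in length two): a finite quiver
(finite sets of vertices `V` and arrows `A` with source and target maps) together with
a set `rel` of composable pairs of arrows, representing the paths of length two
generating the ideal `I`. -/
structure BoundQuiver where
  V : Type
  A : Type
  finV : Finite V
  finA : Finite A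
  src : A → V
  tgt : A → V
  rel : Set (A × A)
  rel_composable : ∀ p ∈ rel, tgt p.1 = src p.2

namespace BoundQuiver

/-- The locally gentle conditions: (i) every vertex has at most two incoming and at most two
outgoing arrows; (ii) for every arrow `β` there is at most one arrow `α` with `t(α) = s(β)`
and `αβ ∉ I` (resp. `αβ ∈ I`), and at most one arrow `γ` with `t(β) = s(γ)` and `βγ ∉ I`
(resp. `βγ ∈ I`). -/
def IsLocallyGentle (Q : BoundQuiver) : Prop :=
  (∀ v : Q.V, Nat.card {a : Q.A // Q.tgt a = v} ≤ 2) ∧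
  (∀ v : Q.V, Nat.card {a : Q.A // Q.src a = v} ≤ 2) ∧
  (∀ β : Q.A, {α : Q.A | Q.tgt α = Q.src β ∧ (α, β) ∉ Q.rel}.Subsingleton) ∧
  (∀ β : Q.A, {α : Q.A | Q.tgt α = Q.src β ∧ (α, β) ∈ Q.rel}.Subsingleton) ∧
  (∀ β : Q.A, {γ : Q.A | Q.tgt β = Q.src γ ∧ (β, γ) ∉ Q.rel}.Subsingleton) ∧
  (∀ β : Q.A, {γ : Q.A | Q.tgt β = Q.src γ ∧ (β, γ) ∈ Q.rel}.Subsingleton)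

/-- The Koszul dual bound quiver: the opposite quiver, with relations the opposites of the
composable pairs of arrows that do *not* lie in `I`. -/
def koszulDual (Q : BoundQuiver) : BoundQuiver where
  V := Q.V
  A := Q.A
  finV := Q.finV
  finA := Q.finA
  src := Q.tgt
  tgt := Q.src
  rel := {p : Q.A × Q.A | Q.tgt p.2 = Q.src p.1 ∧ (p.2, p.1) ∉ Q.rel}
  rel_composable := fun _ hp => hp.1.symm

/-- The degree of a vertex: number of incident arrows counted with multiplicity
(a loop counts once as incoming and once as outgoing). -/
noncomputable def degree (Q : BoundQuiver) (v : Q.V) : ℕ :=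
  Nat.card {a : Q.A // Q.src a = v} + Nat.card {a : Q.A // Q.tgt a = v}

/-- A leaf is a vertex of degree one. -/
def IsLeaf (Q : BoundQuiver) (v : Q.V) : Prop := Q.degree v = 1

/-- A bound quiver is complete if every vertex is incident to exactly one or exactly
four arrows, counted with multiplicity. -/
def IsComplete (Q : BoundQuiver) : Prop := ∀ v : Q.V, Q.degree v = 1 ∨ Q.degree v = 4

/-- The pruned subquiver: delete all leaves and their incident arrows, restricting
the relations accordingly. -/
def pruned (Q : BoundQuiver) : BoundQuiver where
  V := {v : Q.V // ¬ Q.IsLeaf v}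
  A := {a : Q.A // ¬ Q.IsLeaf (Q.src a) ∧ ¬ Q.IsLeaf (Q.tgt a)}
  finV := by haveI := Q.finV; infer_instance
  finA := by haveI := Q.finA; infer_instance
  src := fun a => ⟨Q.src a.1, a.2.1⟩
  tgt := fun a => ⟨Q.tgt a.1, a.2.2⟩
  rel := {p | (p.1.1, p.2.1) ∈ Q.rel}
  rel_composable := fun p hp => Subtype.ext (Q.rel_composable _ hp)

end BoundQuiver

/-- An isomorphism of bound quivers: bijections on vertices and arrows commuting with
sources and targets and preserving the relations. -/
structure BQIso (Q Q' : BoundQuiver) where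
  vEquiv : Q.V ≃ Q'.V
  aEquiv : Q.A ≃ Q'.A
  map_src : ∀ a : Q.A, Q'.src (aEquiv a) = vEquiv (Q.src a)
  map_tgt : ∀ a : Q.A, Q'.tgt (aEquiv a) = vEquiv (Q.tgt a)
  map_rel : ∀ p : Q.A × Q.A, (aEquiv p.1, aEquiv p.2) ∈ Q'.rel ↔ p ∈ Q.rel

/-- `B` is a blossoming quiver of `Q`: `B` is a complete locally gentle bound quiver whose
pruned subquiver is (isomorphic to) `Q`. -/
def IsBlossoming (B Q : BoundQuiver) : Prop :=
  B.IsLocallyGentle ∧ B.IsComplete ∧ Nonempty (BQIso B.pruned Q)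

/-- The Koszul dual of a locally gentle bound quiver is again a locally
gentle bound quiver. -/
theorem koszulDual_isLocallyGentle (Q : BoundQuiver) (h : Q.IsLocallyGentle) :
    Q.koszulDual.IsLocallyGentle := by
  obtain ⟨h1, h2, h3, h4, h5, h6⟩ := h
  refine ⟨h2, h1, ?_, ?_, ?_, ?_⟩
  · intro β a ha b hb
    refine h6 β ⟨ha.1.symm, ?_⟩ ⟨hb.1.symm, ?_⟩
    · by_contra hn; exact ha.2 ⟨ha.1.symm, hn⟩
    · by_contra hn; exact hb.2 ⟨hb.1.symm, hn⟩
  · intro β a ha b hb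
    exact h5 β ⟨ha.1.symm, ha.2.2⟩ ⟨hb.1.symm, hb.2.2⟩
  · intro β a ha b hb
    refine h4 β ⟨ha.1.symm, ?_⟩ ⟨hb.1.symm, ?_⟩
    · by_contra hn; exact ha.2 ⟨ha.1.symm, hn⟩
    · by_contra hn; exact hb.2 ⟨hb.1.symm, hn⟩
  · intro β a ha b hb
    exact h3 β ⟨ha.1.symm, ha.2.2⟩ ⟨hb.1.symm, hb.2.2⟩
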